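/- arXiv:2310.11575 — 2 statements merged into one kernel-verified Lean document; each statement's English description precedes it below -/
import Mathlib

section
/- Fix an integer q ≥ 2 and define φ : ℤ → ℤ³ by φ(x) = (x₁, x₂, x₃) where x = x₁q² + x₂q + x₃ with x₂, x₃ ∈ {0,...,q-1} (i.e., x₃ = x mod q, x₂ = ⌊x/q⌋ mod q, x₁ = ⌊x/q²⌋). Let Δ = {(0,0,0), (0,-1,q), (0,-2,2q)} + {(0,0,0), (-1,q,0), (-2,2q,0)} ⊆ ℤ³ (sumset, so |Δ| ≤ 9). Then for all integers x, y, z: x + y + z = 0 if and only if φ(x) + φ(y) + φ(z) ∈ Δ. -/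
lemma divdiv_aux (a q : ℤ) (h : 0 < q) : a / (q*q) = a / q / q := by
  have h1 := Int.mul_ediv_add_emod a q
  have h2 := Int.mul_ediv_add_emod (a/q) q
  have hr0 : 0 ≤ q*((a/q)%q) + a%q := by
    have := Int.emod_nonneg a h.ne'
    have := Int.emod_nonneg (a/q) h.ne'
    positivity
  have hr1 : q*((a/q)%q) + a%q < q*q := by
    have h3 := Int.emod_lt_of_pos a h
    have h4 := Int.emod_lt_of_pos (a/q) h
    have := Int.emod_nonneg a h.ne'
    nlinarith
  have ha : a = (q*((a/q)%q) + a%q) + (a/q/q)*(q*q) := by linear_combination (-1)*h1 - q*h2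
  conv_lhs => rw [ha]
  rw [Int.add_mul_ediv_right _ _ (by positivity : q*q ≠ 0),
    Int.ediv_eq_zero_of_lt hr0 hr1, zero_add]

lemma decomp_aux (a q : ℤ) (h : 0 < q) : a = q*q*(a/q^2) + q*((a/q)%q) + a%q := by
  rw [sq, divdiv_aux a q h]
  have h1 := Int.mul_ediv_add_emod a q
  have h2 := Int.mul_ediv_add_emod (a/q) q
  linear_combination (-1)*h1 - q*h2

/-- For `q ≥ 2` and `φ(x) = (⌊x/q²⌋, ⌊x/q⌋ mod q, x mod q)`,
with `Δ` the sumset `{(0,0,0),(0,-1,q),(0,-2,2q)} + {(0,0,0),(-1,q,0),(-2,2q,0)}`,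
we have `x + y + z = 0 ↔ φ(x) + φ(y) + φ(z) ∈ Δ`. -/
theorem sum_zero_iff_digits_in_Delta (q : ℤ) (hq : 2 ≤ q) (x y z : ℤ) :
    let φ : ℤ → ℤ × ℤ × ℤ := fun a => (a / q ^ 2, (a / q) % q, a % q)
    let Δ : Set (ℤ × ℤ × ℤ) :=
      Set.image2 (· + ·)
        ({((0 : ℤ), (0 : ℤ), (0 : ℤ)), (0, -1, q), (0, -2, 2 * q)} : Set (ℤ × ℤ × ℤ))
        ({((0 : ℤ), (0 : ℤ), (0 : ℤ)), (-1, q, 0), (-2, 2 * q, 0)} : Set (ℤ × ℤ × ℤ))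
    (x + y + z = 0 ↔ φ x + φ y + φ z ∈ Δ) := by
  intro φ Δ
  have hq0 : (0:ℤ) < q := by linarith
  obtain ⟨A, hA⟩ : ∃ A, x/q^2 + y/q^2 + z/q^2 = A := ⟨_, rfl⟩
  obtain ⟨B, hB⟩ : ∃ B, (x/q)%q + (y/q)%q + (z/q)%q = B := ⟨_, rfl⟩
  obtain ⟨C, hC⟩ : ∃ C, x%q + y%q + z%q = C := ⟨_, rfl⟩
  have key : x + y + z = q*q*A + q*B + C := by
    linear_combination decomp_aux x q hq0 + decomp_aux y q hq0 + decomp_aux z q hq0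
      + (q*q)*hA + q*hB + hC
  have hB0 : 0 ≤ B ∧ B ≤ 3*q - 3 := by
    have := Int.emod_nonneg (x/q) hq0.ne'
    have := Int.emod_nonneg (y/q) hq0.ne'
    have := Int.emod_nonneg (z/q) hq0.ne'
    have := Int.emod_lt_of_pos (x/q) hq0
    have := Int.emod_lt_of_pos (y/q) hq0
    have := Int.emod_lt_of_pos (z/q) hq0
    omega
  have hC0 : 0 ≤ C ∧ C ≤ 3*q - 3 := by
    have := Int.emod_nonneg x hq0.ne'
    have := Int.emod_nonneg y hq0.ne'
    have := Int.emod_nonneg z hq0.ne'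
    have := Int.emod_lt_of_pos x hq0
    have := Int.emod_lt_of_pos y hq0
    have := Int.emod_lt_of_pos z hq0
    omega
  obtain ⟨hB0, hB1⟩ := hB0
  obtain ⟨hC0, hC1⟩ := hC0
  have hsum : φ x + φ y + φ z = (A, B, C) := by
    simp only [φ, Prod.mk_add_mk]
    rw [hA, hB, hC]
  rw [hsum]
  constructor
  · intro h
    have heq : q*q*A + q*B + C = 0 := by linarith [key]
    have hdvd : q ∣ C := ⟨-(q*A + B), by linear_combination heq⟩
    obtain ⟨i, hi⟩ := hdvd
    have hi0 : 0 ≤ i := by nlinarith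
    have hi2 : i ≤ 2 := by nlinarith
    have hBi : B = -q*A - i := by
      have hz : q * (B + q*A + i) = 0 := by linear_combination heq - hi
      rcases mul_eq_zero.mp hz with h' | h'
      · exact absurd h' hq0.ne'
      · linarith
    have hA0 : A ≤ 0 := by nlinarith
    have hA2 : -2 ≤ A := by nlinarith
    interval_cases A <;> interval_cases i
    · exact ⟨(0,0,0), by simp, (-2,2*q,0), by simp, by simp [Prod.ext_iff]; omega⟩
    · exact ⟨(0,-1,q), by simp, (-2,2*q,0), by simp, by simp [Prod.ext_iff]; omega⟩
    · exact ⟨(0,-2,2*q), by simp, (-2,2*q,0), by simp, by simp [Prod.ext_iff]; omega⟩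
    · exact ⟨(0,0,0), by simp, (-1,q,0), by simp, by simp [Prod.ext_iff]; omega⟩
    · exact ⟨(0,-1,q), by simp, (-1,q,0), by simp, by simp [Prod.ext_iff]; omega⟩
    · exact ⟨(0,-2,2*q), by simp, (-1,q,0), by simp, by simp [Prod.ext_iff]; omega⟩
    · exact ⟨(0,0,0), by simp, (0,0,0), by simp, by simp [Prod.ext_iff]; omega⟩
    · exact ⟨(0,-1,q), by simp, (0,0,0), by simp, by simp [Prod.ext_iff]; omega⟩
    · exact ⟨(0,-2,2*q), by simp, (0,0,0), by simp, by simp [Prod.ext_iff]; omega⟩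
  · intro h
    simp only [Δ, Set.mem_image2, Set.mem_insert_iff, Set.mem_singleton_iff] at h
    obtain ⟨a, ha, b, hb, hv⟩ := h
    rcases ha with rfl | rfl | rfl <;> rcases hb with rfl | rfl | rfl <;>
      (simp only [Prod.mk_add_mk, Prod.ext_iff] at hv;
       obtain ⟨h1, h2, h3⟩ := hv;
       linear_combination key - (q*q)*h1 - q*h2 - h3)
end

section
/- Let G be a tripartite weighted graph on parts A, B, C with weights w : (A×B) ∪ (B×C) ∪ (C×A) → ℤ³ (componentwise). Define G' on vertex sets A × ℤ², B × ℤ², C × ℤ² where (a,x₁,z₃) ~ (b,y₃,x₂) iff w(a,b) = (x₁, x₂, -y₃-z₃); (b,y₃,x₂) ~ (c,z₂,y₁) iff w(b,c) = (y₁, -x₂-z₂, y₃); (c,z₂,y₁) ~ (a,x₁,z₃) iff w(c,a) = (-x₁-y₁, z₂, z₃). Then (a,x₁,z₃), (b,y₃,x₂), (c,z₂,y₁) form a triangle in G' if and only if a, b, c form a triangle in G with w(a,b) + w(b,c) + w(c,a) = (0,0,0), w(a,b) having first component x₁ and second component x₂, w(b,c) having first component y₁ and third component y₃, and w(c,a)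 having second component z₂ and third component z₃. -/
/-- Correctness of the Exact-Triangle-to-Sparse-Triangle graph `G'`:
`(a,x₁,z₃), (b,y₃,x₂), (c,z₂,y₁)` form a triangle in `G'` iff `a, b, c`
form a triangle in `G` whose `ℤ³`-weights sum to `(0,0,0)` and whose
relevant weight components match `x₁, x₂, y₁, y₃, z₂, z₃`. -/
theorem exact_tri_graph_correctness {A B C : Type*}
    (eAB : A → B → Prop) (eBC : B → C → Prop) (eCA : C → A → Prop)
    (wAB : A → B → ℤ × ℤ × ℤ) (wBC : B → C → ℤ × ℤ × ℤ) (wCA : C → A → ℤ × ℤ × ℤ)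
    (a : A) (b : B) (c : C) (x₁ z₃ y₃ x₂ z₂ y₁ : ℤ) :
    ((eAB a b ∧ wAB a b = (x₁, x₂, -y₃ - z₃)) ∧
     (eBC b c ∧ wBC b c = (y₁, -x₂ - z₂, y₃)) ∧
     (eCA c a ∧ wCA c a = (-x₁ - y₁, z₂, z₃))) ↔
    (eAB a b ∧ eBC b c ∧ eCA c a ∧
      wAB a b + wBC b c + wCA c a = ((0 : ℤ), (0 : ℤ), (0 : ℤ)) ∧
      (wAB a b).1 = x₁ ∧ (wAB a b).2.1 = x₂ ∧
      (wBC b c).1 = y₁ ∧ (wBC b c).2.2 = y₃ ∧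
      (wCA c a).2.1 = z₂ ∧ (wCA c a).2.2 = z₃) := by
  obtain ⟨u1,u2,u3⟩ := wAB a b
  obtain ⟨v1,v2,v3⟩ := wBC b c
  obtain ⟨t1,t2,t3⟩ := wCA c a
  simp only [Prod.mk_add_mk, Prod.mk.injEq]
  constructor
  · rintro ⟨⟨h1,e1,e2,e3⟩,⟨h2,f1,f2,f3⟩,⟨h3,g1,g2,g3⟩⟩
    refine ⟨h1,h2,h3,⟨?_,?_,?_⟩,?_,?_,?_,?_,?_,?_⟩ <;> omega
  · rintro ⟨h1,h2,h3,⟨s1,s2,s3⟩,p1,p2,p3,p4,p5,p6⟩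
    refine ⟨⟨h1,?_,?_,?_⟩,⟨h2,?_,?_,?_⟩,⟨h3,?_,?_,?_⟩⟩ <;> omega
end
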